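/- arXiv:2110.13743 — 2 statements merged into one kernel-verified Lean document; each statement's English description precedes it below -/
import Mathlib

section
/- For all compositions u and v and every z ∈ ℂ with |z| < 1, Li_u(z)·Li_v(z) = Σ_w (u ⧢ v)(w)·Li_w(z), the (finite) sum ranging over all compositions w; that is, Li_• is a shuffle character on polynomials: Li_{u⧢v} = Li_u·Li_v on the unit disk. -/
open scoped NNReal ENNReal

/-- A composition: a finite list of positive integers. -/
abbrev Comp := List ℕ+

/-- Harmonic sum `H_s(N) = Σ_{N ≥ n₁ > … > n_r > 0} 1/(n₁^{s₁} ⋯ n_r^{s_r})`,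
with `H_ε(N) = 1`. -/
noncomputable def Hc : Comp → ℕ → ℂ
  | [], _ => 1
  | s :: u, N => ∑ n ∈ Finset.Icc 1 N, ((n : ℂ) ^ (s : ℕ))⁻¹ * Hc u (n - 1)

/-- Polylogarithm `Li_s(z) = Σ_{n₁ > … > n_r > 0} z^{n₁}/(n₁^{s₁} ⋯ n_r^{s_r})`,
with `Li_ε = 1` (the `n = 0` term of the `tsum` vanishes since `s ≥ 1`). -/
noncomputable def LiC : Comp → ℂ → ℂ
  | [], _ => 1
  | s :: u, z => ∑' n : ℕ, z ^ n * ((n : ℂ) ^ (s : ℕ))⁻¹ * Hc u (n - 1)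

/-- Shuffle coefficient on words over the alphabet `X = {x₀, x₁} ≃ Bool`:
`⟨u ⧢ v, w⟩`. -/
def shufW : List Bool → List Bool → List Bool → ℕ
  | [], v, w => if w = v then 1 else 0
  | u, [], w => if w = u then 1 else 0
  | _ :: _, _ :: _, [] => 0
  | a :: u, b :: v, c :: w =>
      (if c = a then shufW u (b :: v) w else 0) +
      (if c = b then shufW (a :: u) v w else 0)
termination_by u v _ => u.length + v.length

/-- The word `π_X(s) = x₀^{s₁−1}x₁ ⋯ x₀^{s_r−1}x₁` (coding `x₀ = false`,
`x₁ = true`). -/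
def piX : Comp → List Bool
  | [] => []
  | s :: u => List.replicate ((s : ℕ) - 1) false ++ true :: piX u

/-- Shuffle coefficient transported to compositions:
`(u ⧢ v)(w) = (π_X(u) ⧢ π_X(v))(π_X(w))`. -/
def shufC (u v w : Comp) : ℕ := shufW (piX u) (piX v) (piX w)

/-!
To a word `w` over `{x₀, x₁}` we attach a formal power series `liSeries w`; for `w = π_X(s)` its
sum on the unit disk is `Li_s`. For words not ending in `x₀` the shuffle identity is first proved
in `ℂ⟦X⟧`: both sides have constant term `0`, and after multiplication by `X (1 - X)` the Leibniz
rule for the left side reproduces the recursion defining the shuffle on the right side, so by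
induction the derivatives agree; `X (1 - X)` can be cancelled because `ℂ⟦X⟧` is a domain. The
coefficients of `liSeries w` are bounded by `1`, so on the unit disk summation is multiplicative
(Cauchy product), which carries the identity over to the polylogarithms.
-/

namespace List

variable {α : Type*}

def shuffles : List α → List α → List (List α)
  | [], v => [v]
  | u, [] => [u]
  | a :: u, b :: v => (shuffles u (b :: v)).map (a :: ·) ++ (shuffles (a :: u) v).map (b :: ·)

@[simp] theorem shuffles_nil_left (v : List α) : shuffles [] v = [v] := by
  simp [shuffles]

@[simp] theorem shuffles_nil_right (u : List α) : shuffles u [] = [u] := by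
  cases u <;> simp [shuffles]

theorem shuffles_cons_cons (a b : α) (u v : List α) :
    shuffles (a :: u) (b :: v) =
      (shuffles u (b :: v)).map (a :: ·) ++ (shuffles (a :: u) v).map (b :: ·) := by
  simp [shuffles]

theorem length_of_mem_shuffles {u v w : List α} (h : w ∈ shuffles u v) :
    w.length = u.length + v.length := by
  induction u, v using shuffles.induct generalizing w with
  | case1 v => simp_all
  | case2 u => simp_all
  | case3 a u b v ih₁ ih₂ =>
    rw [shuffles_cons_cons, mem_append, mem_map, mem_map] at h
    rcases h with ⟨w, hw, rfl⟩ | ⟨w, hw, rfl⟩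
    · simp [ih₁ hw]; omega
    · simp [ih₂ hw]; omega

theorem count_cons_map_cons [DecidableEq α] (a c : α) (w : List α) (L : List (List α)) :
    (L.map (a :: ·)).count (c :: w) = if c = a then L.count w else 0 := by
  split_ifs with h
  · subst h; exact count_map_of_injective _ _ cons_injective _
  · exact count_eq_zero.mpr (by simp [Ne.symm h])

theorem replicate_append_cons_inj {a b : α} (hab : a ≠ b) {k l : ℕ} {x y : List α}
    (h : replicate k a ++ b :: x = replicate l a ++ b :: y) : k = l ∧ x = y := by
  induction k generalizing l with
  | zero => cases l <;> simp_all [replicate_succ, Ne.symm hab]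
  | succ k ih => cases l <;> simp_all [replicate_succ]

end List

open List PowerSeries

theorem count_shuffles (u v w : List Bool) : (shuffles u v).count w = shufW u v w := by
  induction u, v, w using shufW.induct with
  | case6 a u b v c w ih₁ ih₂ =>
    rw [shuffles_cons_cons, count_append, count_cons_map_cons, count_cons_map_cons, ih₁, ih₂,
      shufW]
  | _ => simp_all [shufW, shuffles, count_eq_zero, eq_comm]

def IsCompositionWord (w : List Bool) : Prop := w.getLast? ≠ some false

namespace IsCompositionWord

theorem of_cons {a : Bool} {w : List Bool} (h : IsCompositionWord (a :: w)) :
    IsCompositionWord w := by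
  cases w with
  | nil => simp [IsCompositionWord]
  | cons b w => simpa [IsCompositionWord, getLast?_cons_cons] using h

theorem cons {w : List Bool} (h : IsCompositionWord w) (a : Bool) (hw : w ≠ []) :
    IsCompositionWord (a :: w) := by
  cases w with
  | nil => exact absurd rfl hw
  | cons b w => simpa [IsCompositionWord, getLast?_cons_cons] using h

theorem ne_nil_of_false_cons {w : List Bool} (h : IsCompositionWord (false :: w)) : w ≠ [] := by
  rintro rfl
  simp [IsCompositionWord] at h

theorem of_mem_shuffles {u v w : List Bool} (hu : IsCompositionWord u)
    (hv : IsCompositionWord v) (h : w ∈ shuffles u v) : IsCompositionWord w := by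
  induction u, v using shuffles.induct generalizing w with
  | case1 v => simp_all
  | case2 u => simp_all
  | case3 a u b v ih₁ ih₂ =>
    rw [shuffles_cons_cons, mem_append, mem_map, mem_map] at h
    rcases h with ⟨w, hw, rfl⟩ | ⟨w, hw, rfl⟩
    · refine (ih₁ hu.of_cons hv hw).cons a ?_
      simp [← length_pos_iff, length_of_mem_shuffles hw]
    · refine (ih₂ hu hv.of_cons hw).cons b ?_
      simp [← length_pos_iff, length_of_mem_shuffles hw]

end IsCompositionWord

theorem piX_cons (s : ℕ+) (c : Comp) :
    piX (s :: c) = replicate ((s : ℕ) - 1) false ++ true :: piX c := rfl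

theorem isCompositionWord_piX (c : Comp) : IsCompositionWord (piX c) := by
  induction c with
  | nil => simp [IsCompositionWord, piX]
  | cons s c ih =>
    rw [IsCompositionWord, piX_cons, getLast?_append_cons]
    cases c with
    | nil => simp [piX]
    | cons t c => exact ih.cons true (by simp [piX_cons])

theorem IsCompositionWord.mem_range_piX {w : List Bool} (h : IsCompositionWord w) :
    w ∈ Set.range piX := by
  induction w with
  | nil => exact ⟨[], rfl⟩
  | cons a w ih =>
    obtain ⟨c, rfl⟩ := ih h.of_cons
    cases a with
    | true => exact ⟨1 :: c, rfl⟩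
    | false =>
      obtain ⟨s, c, rfl⟩ : ∃ s c', c = s :: c' := by
        cases c with
        | nil => exact absurd rfl h.ne_nil_of_false_cons
        | cons s c' => exact ⟨s, c', rfl⟩
      refine ⟨(s + 1) :: c, ?_⟩
      rw [piX_cons, piX_cons, PNat.add_coe, PNat.one_coe, Nat.add_sub_cancel]
      conv_lhs => rw [← Nat.sub_add_cancel s.pos, replicate_succ]
      rfl

theorem piX_injective : Function.Injective piX := by
  intro c d h
  induction c generalizing d with
  | nil => cases d <;> simp_all [piX]
  | cons s c ih =>
    cases d with
    | nil => simp [piX] at h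
    | cons t d =>
      obtain ⟨hst, hcd⟩ := List.replicate_append_cons_inj Bool.false_ne_true h
      have hs := s.pos
      have ht := t.pos
      rw [ih hcd, PNat.coe_inj.mp (show (s : ℕ) = t by omega)]

theorem tsum_count_smul_of_forall_mem_range {α β M : Type*} [BEq α] [LawfulBEq α]
    [AddCommMonoid M] [TopologicalSpace M] {φ : β → α} (hφ : φ.Injective) (g : α → M)
    (L : List α) (hL : ∀ a ∈ L, a ∈ Set.range φ) :
    ∑' b, L.count (φ b) • g (φ b) = (L.map g).sum := by
  classical
  obtain rfl : ‹BEq α› = instBEqOfDecidableEq := lawful_beq_subsingleton _ _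
  rw [Finset.sum_list_map_count, ← Finset.sum_preimage φ L.toFinset hφ.injOn _
    (fun a ha ha' => absurd (hL a (mem_toFinset.mp ha)) ha')]
  refine tsum_eq_sum fun b hb => ?_
  rw [count_eq_zero_of_not_mem (by simpa using hb), zero_smul]

/-- The letters act as the integration operators `f ↦ ∫₀ f(t) dt / t` (`x₀ = false`) and
`f ↦ ∫₀ f(t) dt / (1 - t)` (`x₁ = true`). -/
noncomputable def liSeries : List Bool → ℂ⟦X⟧
  | [] => 1
  | false :: w => mk fun n => coeff n (liSeries w) / n
  | true :: w => mk fun n => (∑ m ∈ Finset.range n, coeff m (liSeries w)) / n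

theorem coeff_liSeries_false_cons (w : List Bool) (n : ℕ) :
    coeff n (liSeries (false :: w)) = coeff n (liSeries w) / n := by
  simp [liSeries]

theorem coeff_liSeries_true_cons (w : List Bool) (n : ℕ) :
    coeff n (liSeries (true :: w)) = (∑ m ∈ Finset.range n, coeff m (liSeries w)) / n := by
  simp [liSeries]

theorem constantCoeff_liSeries_cons (a : Bool) (w : List Bool) :
    constantCoeff (liSeries (a :: w)) = 0 := by
  rw [← coeff_zero_eq_constantCoeff_apply]
  cases a <;> simp [coeff_liSeries_false_cons, coeff_liSeries_true_cons]

theorem norm_coeff_liSeries_le_one (w : List Bool) (n : ℕ) : ‖coeff n (liSeries w)‖ ≤ 1 := by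
  induction w generalizing n with
  | nil => simp only [liSeries, coeff_one]; split_ifs <;> simp
  | cons a w ih =>
    rcases Nat.eq_zero_or_pos n with rfl | hn
    · simp [coeff_zero_eq_constantCoeff_apply, constantCoeff_liSeries_cons]
    cases a with
    | false =>
      rw [coeff_liSeries_false_cons, norm_div, Complex.norm_natCast]
      exact div_le_one_of_le₀ ((ih n).trans (by exact_mod_cast hn)) n.cast_nonneg
    | true =>
      rw [coeff_liSeries_true_cons, norm_div, Complex.norm_natCast]
      refine div_le_one_of_le₀ ((norm_sum_le _ _).trans ?_) n.cast_nonneg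
      calc ∑ m ∈ Finset.range n, ‖coeff m (liSeries w)‖
          ≤ ∑ m ∈ Finset.range n, (1 : ℝ) := Finset.sum_le_sum fun m _ => ih m
        _ = n := by simp

theorem X_mul_derivative_liSeries_false_cons {w : List Bool}
    (hw : constantCoeff (liSeries w) = 0) : X * d⁄dX ℂ (liSeries (false :: w)) = liSeries w := by
  ext (_ | n)
  · simp [coeff_zero_X_mul, hw]
  · rw [coeff_succ_X_mul, coeff_derivative, coeff_liSeries_false_cons, Nat.cast_succ,
      div_mul_cancel₀ _ (Nat.cast_add_one_ne_zero n)]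

theorem one_sub_X_mul_derivative_liSeries_true_cons (w : List Bool) :
    (1 - X) * d⁄dX ℂ (liSeries (true :: w)) = liSeries w := by
  have hD : d⁄dX ℂ (liSeries (true :: w)) =
      mk fun n => ∑ m ∈ Finset.range (n + 1), coeff m (liSeries w) := by
    ext n
    rw [coeff_derivative, coeff_liSeries_true_cons, coeff_mk, Nat.cast_succ,
      div_mul_cancel₀ _ (Nat.cast_add_one_ne_zero n)]
  ext (_ | n)
  · simp [hD, sub_mul]
  · simp [hD, sub_mul, coeff_succ_X_mul, Finset.sum_range_succ _ (n + 1)]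

theorem X_mul_one_sub_X_mul_derivative_liSeries_cons {a : Bool} {w : List Bool}
    (h : IsCompositionWord (a :: w)) :
    X * (1 - X) * d⁄dX ℂ (liSeries (a :: w)) = cond a X (1 - X) * liSeries w := by
  cases a with
  | false =>
    obtain ⟨b, w, rfl⟩ := exists_cons_of_ne_nil h.ne_nil_of_false_cons
    rw [mul_right_comm, X_mul_derivative_liSeries_false_cons (constantCoeff_liSeries_cons b w)]
    exact mul_comm _ _
  | true => rw [mul_assoc, one_sub_X_mul_derivative_liSeries_true_cons]; rfl

theorem X_mul_one_sub_X_mul_derivative_sum_liSeries_cons (a : Bool) (L : List (List Bool))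
    (hL : ∀ w ∈ L, IsCompositionWord (a :: w)) :
    X * (1 - X) * d⁄dX ℂ ((L.map fun w => liSeries (a :: w)).sum) =
      cond a X (1 - X) * (L.map liSeries).sum := by
  rw [map_list_sum, ← sum_map_mul_left, ← sum_map_mul_left, map_map]
  exact congrArg sum (map_congr_left fun w hw =>
    X_mul_one_sub_X_mul_derivative_liSeries_cons (hL w hw))

theorem liSeries_mul_liSeries {u v : List Bool} (hu : IsCompositionWord u)
    (hv : IsCompositionWord v) : liSeries u * liSeries v = ((shuffles u v).map liSeries).sum := by
  induction u, v using shuffles.induct with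
  | case1 v => simp [liSeries]
  | case2 u => simp [liSeries]
  | case3 a u b v ih₁ ih₂ =>
    have hleft (w) (hw : w ∈ shuffles u (b :: v)) : IsCompositionWord (a :: w) :=
      hu.of_mem_shuffles hv (by simp [shuffles_cons_cons, hw])
    have hright (w) (hw : w ∈ shuffles (a :: u) v) : IsCompositionWord (b :: w) :=
      hu.of_mem_shuffles hv (by simp [shuffles_cons_cons, hw])
    have hconst : constantCoeff (liSeries (a :: u) * liSeries (b :: v)) =
        constantCoeff ((shuffles (a :: u) (b :: v)).map liSeries).sum := by
      simp [shuffles_cons_cons, map_list_sum, constantCoeff_liSeries_cons, Function.comp_def]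
    have hX : (X * (1 - X) : ℂ⟦X⟧) ≠ 0 := mul_ne_zero X_ne_zero
      (sub_ne_zero.mpr (fun h => by simpa using congrArg (coeff 0) h))
    refine derivative.ext (mul_left_cancel₀ hX ?_) hconst
    calc X * (1 - X) * d⁄dX ℂ (liSeries (a :: u) * liSeries (b :: v))
        = cond a X (1 - X) * (liSeries u * liSeries (b :: v)) +
            cond b X (1 - X) * (liSeries (a :: u) * liSeries v) := by
          rw [Derivation.leibniz, smul_eq_mul, smul_eq_mul, mul_add,
            mul_left_comm _ (liSeries (a :: u)), mul_left_comm _ (liSeries (b :: v)),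
            X_mul_one_sub_X_mul_derivative_liSeries_cons hu,
            X_mul_one_sub_X_mul_derivative_liSeries_cons hv]
          ring
      _ = cond a X (1 - X) * ((shuffles u (b :: v)).map liSeries).sum +
            cond b X (1 - X) * ((shuffles (a :: u) v).map liSeries).sum := by
          rw [ih₁ hu.of_cons hv, ih₂ hu hv.of_cons]
      _ = X * (1 - X) * d⁄dX ℂ ((shuffles (a :: u) (b :: v)).map liSeries).sum := by
          rw [shuffles_cons_cons, map_append, sum_append, map_map, map_map, map_add, mul_add,
            Function.comp_def, Function.comp_def,
            X_mul_one_sub_X_mul_derivative_sum_liSeries_cons a _ hleft,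
            X_mul_one_sub_X_mul_derivative_sum_liSeries_cons b _ hright]

namespace PowerSeries

noncomputable def tsumEval {R : Type*} [Semiring R] [TopologicalSpace R] (f : R⟦X⟧) (z : R) : R :=
  ∑' n, coeff n f * z ^ n

theorem tsumEval_mul {R : Type*} [NormedCommRing R] [CompleteSpace R] {f g : R⟦X⟧} {z : R}
    (hf : Summable fun n => ‖coeff n f * z ^ n‖) (hg : Summable fun n => ‖coeff n g * z ^ n‖) :
    tsumEval (f * g) z = tsumEval f z * tsumEval g z := by
  rw [tsumEval, tsumEval, tsumEval, tsum_mul_tsum_eq_tsum_sum_antidiagonal_of_summable_norm hf hg]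
  refine tsum_congr fun n => ?_
  rw [coeff_mul, Finset.sum_mul]
  refine Finset.sum_congr rfl fun ij hij => ?_
  rw [← Finset.HasAntidiagonal.mem_antidiagonal.mp hij, pow_add]
  ring

theorem tsumEval_list_sum {R : Type*} [Semiring R] [TopologicalSpace R] [ContinuousAdd R]
    [T2Space R] (L : List R⟦X⟧) {z : R} (hL : ∀ f ∈ L, Summable fun n => coeff n f * z ^ n) :
    tsumEval L.sum z = (L.map (tsumEval · z)).sum := by
  suffices HasSum (fun n => coeff n L.sum * z ^ n) (L.map (tsumEval · z)).sum from this.tsum_eq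
  induction L with
  | nil => simp [hasSum_zero]
  | cons f L ih =>
    simp only [sum_cons, map_add, add_mul, map_cons]
    exact (hL f mem_cons_self).hasSum.add (ih fun g hg => hL g (mem_cons_of_mem _ hg))

end PowerSeries

theorem summable_norm_coeff_liSeries_mul_pow (w : List Bool) {z : ℂ} (hz : ‖z‖ < 1) :
    Summable fun n => ‖coeff n (liSeries w) * z ^ n‖ :=
  (summable_geometric_of_lt_one (norm_nonneg z) hz).of_nonneg_of_le (fun _ => norm_nonneg _)
    fun n => by
      rw [norm_mul, norm_pow]
      exact mul_le_of_le_one_left (by positivity) (norm_coeff_liSeries_le_one w n)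

theorem coeff_liSeries_replicate_false_append (k : ℕ) (w : List Bool) (n : ℕ) :
    coeff n (liSeries (replicate k false ++ w)) = ((n : ℂ) ^ k)⁻¹ * coeff n (liSeries w) := by
  induction k with
  | zero => simp
  | succ k ih =>
    rw [replicate_succ, cons_append, coeff_liSeries_false_cons, ih, pow_succ, mul_inv]
    ring

theorem coeff_liSeries_piX_cons (s : ℕ+) (c : Comp) (n : ℕ) :
    coeff n (liSeries (piX (s :: c))) =
      ((n : ℂ) ^ (s : ℕ))⁻¹ * ∑ m ∈ Finset.range n, coeff m (liSeries (piX c)) := by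
  obtain ⟨k, hk⟩ : ∃ k, (s : ℕ) = k + 1 := ⟨s - 1, (Nat.sub_add_cancel s.pos).symm⟩
  rw [piX_cons, coeff_liSeries_replicate_false_append, coeff_liSeries_true_cons, hk,
    Nat.add_sub_cancel, pow_succ, mul_inv]
  ring

theorem sum_range_succ_coeff_liSeries_piX (c : Comp) (N : ℕ) :
    ∑ m ∈ Finset.range (N + 1), coeff m (liSeries (piX c)) = Hc c N := by
  induction c generalizing N with
  | nil => simp [piX, liSeries, Hc, coeff_one]
  | cons s c ih =>
    induction N with
    | zero => simp [coeff_liSeries_piX_cons, Hc]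
    | succ N ihN =>
      rw [Finset.sum_range_succ, ihN, coeff_liSeries_piX_cons, ih, Hc, Hc,
        Finset.sum_Icc_succ_top (by omega)]
      simp

theorem LiC_eq_tsumEval_liSeries (c : Comp) (z : ℂ) :
    LiC c z = tsumEval (liSeries (piX c)) z := by
  cases c with
  | nil => simp [LiC, tsumEval, piX, liSeries, coeff_one]
  | cons s c =>
    refine tsum_congr fun n => ?_
    cases n with
    | zero => simp [coeff_liSeries_piX_cons]
    | succ n =>
      rw [coeff_liSeries_piX_cons, sum_range_succ_coeff_liSeries_piX, Nat.add_sub_cancel]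
      ring

/-- `Li_•` is a shuffle character: for all compositions `u, v` and `|z| < 1`,
`Li_u(z)·Li_v(z) = Σ_w (u ⧢ v)(w)·Li_w(z)` (a finite sum over compositions,
realized as a `tsum`). -/
theorem li_shuffle_character (u v : Comp) (z : ℂ) (hz : ‖z‖ < 1) :
    LiC u z * LiC v z = ∑' w : Comp, (shufC u v w : ℂ) * LiC w z := by
  have hshuffles (w) (hw : w ∈ shuffles (piX u) (piX v)) : IsCompositionWord w :=
    (isCompositionWord_piX u).of_mem_shuffles (isCompositionWord_piX v) hw
  rw [LiC_eq_tsumEval_liSeries, LiC_eq_tsumEval_liSeries,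
    ← tsumEval_mul (summable_norm_coeff_liSeries_mul_pow _ hz)
      (summable_norm_coeff_liSeries_mul_pow _ hz),
    liSeries_mul_liSeries (isCompositionWord_piX u) (isCompositionWord_piX v),
    tsumEval_list_sum _ (by
      simpa using fun w _ => (summable_norm_coeff_liSeries_mul_pow w hz).of_norm),
    map_map]
  simp_rw [shufC, ← count_shuffles, LiC_eq_tsumEval_liSeries, ← nsmul_eq_mul]
  exact (tsum_count_smul_of_forall_mem_range piX_injective (fun w => tsumEval (liSeries w) z) _
    fun w hw => (hshuffles w hw).mem_range_piX).symm
end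

section
/- Let 0 < R ≤ 1 and α ∈ Dom_R, so that Li_α(z) := Σ_{n≥0} Li_{α,n}(z) is analytic on |z| < R, and define H_α(N) by the Taylor expansion Li_α(z)/(1−z) = Σ_{N≥0} H_α(N)·z^N for |z| < R. Then for every r ∈ (0,R), Σ_{n,N≥0} |H_{α,n}(N)|·r^N < ∞; in particular, for every N ∈ ℕ, the series Σ_{n≥0} H_{α,n}(N) converges absolutely and its sum equals H_α(N). -/
/-!
Each homogeneous component `homog α n` is a finite combination of polylogarithms, and the Cauchy
product with the geometric series gives `Li_s(z)/(1 - z) = Σ_N H_s(N) z^N` for `|z| < 1`; so the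
`H_{α,n}(N)` are the Taylor coefficients of `Li_{α,n}(z)/(1 - z)`. For `r < r' < R`, Cauchy's
estimate on the circle of radius `r'` gives
`|H_{α,n}(N)| r^N ≤ (sup_{|z| ≤ r'} |Li_{α,n}(z)|) / (1 - r') · (r/r')^N`,
which is summable over `(n, N)` because `α ∈ Dom_R`. Absolute convergence lets us sum over `n`
first, and uniqueness of Taylor coefficients identifies `Σ_n H_{α,n}(N)` with `H_α(N)`.
-/

open scoped NNReal ENNReal

/-- Weight of a composition. -/
def wt (s : Comp) : ℕ := (s.map fun p => (p : ℕ)).sum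

/-- `Li_P(z) = Σ_s P(s)·Li_s(z)` for a (finitely supported) function `P` on
compositions. -/
noncomputable def LiP (P : Comp → ℂ) (z : ℂ) : ℂ := ∑' s : Comp, P s * LiC s z

/-- `H_P(N) = Σ_s P(s)·H_s(N)` for a (finitely supported) function `P` on
compositions. -/
noncomputable def HP (P : Comp → ℂ) (N : ℕ) : ℂ := ∑' s : Comp, P s * Hc s N

/-- Weight-`n` homogeneous component of a function on compositions. -/
def homog (α : Comp → ℂ) (n : ℕ) : Comp → ℂ := fun s => if wt s = n then α s else 0

/-- `Dom_R`: the set of `α` with `Σ_n sup_{|z|≤r} |Li_{α,n}(z)| < ∞` for every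
`r ∈ (0,R)`. -/
noncomputable def DomR (R : ℝ) : Set (Comp → ℂ) :=
  {α | ∀ r : ℝ, 0 < r → r < R →
    (∑' n : ℕ, ⨆ z ∈ Metric.closedBall (0 : ℂ) r, (‖LiP (homog α n) z‖₊ : ℝ≥0∞)) < ⊤}


section PowerSeries

variable {c d : ℕ → ℂ} {g : ℂ → ℂ} {ρ : ℝ}

lemma hasFPowerSeriesOnBall_ofScalars_of_hasSum (hρ : 0 < ρ)
    (hs : ∀ z : ℂ, ‖z‖ < ρ → HasSum (fun N => c N * z ^ N) (g z)) :
    HasFPowerSeriesOnBall g (FormalMultilinearSeries.ofScalars ℂ c) 0 (ENNReal.ofReal ρ) where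
  r_le := by
    refine ENNReal.le_of_forall_nnreal_lt fun t ht => ?_
    have htρ : (t : ℝ) < ρ := by
      rwa [← ENNReal.ofReal_coe_nnreal, ENNReal.ofReal_lt_ofReal_iff hρ] at ht
    refine FormalMultilinearSeries.le_radius_of_tendsto _ (l := 0) ?_
    simpa [FormalMultilinearSeries.ofScalars_norm] using
      (hs (t : ℝ) (by simpa using htρ)).summable.tendsto_atTop_zero.norm
  r_pos := ENNReal.ofReal_pos.mpr hρ
  hasSum {y} hy := by
    rw [Metric.mem_eball, edist_zero_right, ← ofReal_norm, ENNReal.ofReal_lt_ofReal_iff hρ] at hy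
    simpa [FormalMultilinearSeries.ofScalars_apply_eq, mul_comm] using hs y hy

lemma eq_of_hasSum_pow_mul (hρ : 0 < ρ)
    (hc : ∀ z : ℂ, ‖z‖ < ρ → HasSum (fun N => c N * z ^ N) (g z))
    (hd : ∀ z : ℂ, ‖z‖ < ρ → HasSum (fun N => d N * z ^ N) (g z)) : c = d :=
  FormalMultilinearSeries.ofScalars_series_injective ℂ ℂ <|
    (hasFPowerSeriesOnBall_ofScalars_of_hasSum hρ hc).hasFPowerSeriesAt.eq_formalMultilinearSeries
      (hasFPowerSeriesOnBall_ofScalars_of_hasSum hρ hd).hasFPowerSeriesAt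

lemma norm_mul_pow_le_of_hasSum_pow_mul {r M : ℝ} (hr : 0 < r) (hrρ : r < ρ)
    (hs : ∀ z : ℂ, ‖z‖ < ρ → HasSum (fun N => c N * z ^ N) (g z))
    (hM : ∀ z : ℂ, ‖z‖ ≤ r → ‖g z‖ ≤ M) (N : ℕ) : ‖c N‖ * r ^ N ≤ M := by
  have hg := hasFPowerSeriesOnBall_ofScalars_of_hasSum (hr.trans hrρ) hs
  have hc : c = fun n => iteratedDeriv n g 0 / n.factorial :=
    FormalMultilinearSeries.ofScalars_series_injective ℂ ℂ <|
      hg.hasFPowerSeriesAt.eq_formalMultilinearSeries hg.analyticAt.hasFPowerSeriesAt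
  have hball : Metric.closedBall (0 : ℂ) r ⊆ Metric.eball 0 (ENNReal.ofReal ρ) := fun z hz => by
    rw [mem_closedBall_zero_iff] at hz
    rw [Metric.mem_eball, edist_zero_right, ← ofReal_norm,
      ENNReal.ofReal_lt_ofReal_iff (hr.trans hrρ)]
    exact hz.trans_lt hrρ
  have hcauchy := Complex.norm_iteratedDeriv_le_of_forall_mem_sphere_norm_le N hr
    (hg.differentiableOn.diffContOnCl_ball hball) fun z hz =>
      hM z (mem_sphere_zero_iff_norm.1 hz).le
  rw [hc, norm_div, Complex.norm_natCast, ← le_div_iff₀ (by positivity)]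
  calc ‖iteratedDeriv N g 0‖ / N.factorial ≤ N.factorial * M / r ^ N / N.factorial := by
        gcongr
    _ = M / r ^ N := by field_simp

end PowerSeries

lemma hasSum_sum_range_mul_pow {𝕜 : Type*} [NormedField 𝕜] [CompleteSpace 𝕜] {a : ℕ → 𝕜}
    {z : 𝕜} (hz : ‖z‖ < 1) (ha : Summable fun k => ‖a k * z ^ k‖) :
    HasSum (fun N => (∑ k ∈ Finset.range (N + 1), a k) * z ^ N)
      ((∑' k, a k * z ^ k) / (1 - z)) := by
  have hgeom : Summable fun k => ‖z ^ k‖ := by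
    simpa [norm_pow] using summable_geometric_of_lt_one (norm_nonneg z) hz
  have hterm : ∀ N, ∑ k ∈ Finset.range (N + 1), a k * z ^ k * z ^ (N - k) =
      (∑ k ∈ Finset.range (N + 1), a k) * z ^ N := fun N => by
    rw [Finset.sum_mul]
    refine Finset.sum_congr rfl fun k hk => ?_
    rw [mul_assoc, ← pow_add, Nat.add_sub_cancel' (Finset.mem_range_succ_iff.1 hk)]
  have hcauchy := (summable_norm_sum_mul_range_of_summable_norm ha hgeom).of_norm.hasSum
  rwa [← tsum_mul_tsum_eq_tsum_sum_range_of_summable_norm ha hgeom,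
    tsum_geometric_of_norm_lt_one hz, ← div_eq_mul_inv, funext hterm] at hcauchy

lemma norm_inv_natCast_pow_le_one (k a : ℕ) : ‖((k : ℂ) ^ a)⁻¹‖ ≤ 1 := by
  rcases k.eq_zero_or_pos with rfl | hk
  · rcases a.eq_zero_or_pos with rfl | ha
    · simp
    · simp [zero_pow ha.ne']
  · rw [norm_inv, norm_pow, Complex.norm_natCast]
    exact inv_le_one_of_one_le₀ (one_le_pow₀ (mod_cast hk))

lemma norm_Hc_le (s : Comp) (N : ℕ) : ‖Hc s N‖ ≤ (N : ℝ) ^ s.length := by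
  induction s generalizing N with
  | nil => simp [Hc]
  | cons a u ih =>
    have hterm : ∀ n ∈ Finset.Icc 1 N, ‖((n : ℂ) ^ (a : ℕ))⁻¹ * Hc u (n - 1)‖ ≤
        (N : ℝ) ^ u.length := fun n hn => by
      rw [norm_mul, ← one_mul ((N : ℝ) ^ u.length)]
      refine mul_le_mul (norm_inv_natCast_pow_le_one n a) ((ih _).trans ?_) (norm_nonneg _)
        zero_le_one
      gcongr
      exact Nat.sub_le_of_le_add (by linarith [(Finset.mem_Icc.1 hn).2])
    calc ‖Hc (a :: u) N‖ ≤ ∑ n ∈ Finset.Icc 1 N, (N : ℝ) ^ u.length :=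
          (norm_sum_le _ _).trans (Finset.sum_le_sum hterm)
      _ = (N : ℝ) ^ (a :: u).length := by simp [pow_succ, mul_comm]

lemma Hc_cons_eq_sum_range (a : ℕ+) (u : Comp) (N : ℕ) :
    Hc (a :: u) N = ∑ k ∈ Finset.range (N + 1), ((k : ℂ) ^ (a : ℕ))⁻¹ * Hc u (k - 1) := by
  rw [Finset.range_eq_Ico, Finset.sum_eq_sum_Ico_succ_bot N.succ_pos, Hc]
  simp [zero_pow a.ne_zero, Finset.Ico_add_one_right_eq_Icc]

lemma hasSum_Hc_mul_pow (s : Comp) {z : ℂ} (hz : ‖z‖ < 1) :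
    HasSum (fun N => Hc s N * z ^ N) (LiC s z / (1 - z)) := by
  cases s with
  | nil => simpa [Hc, LiC, div_eq_inv_mul] using hasSum_geometric_of_norm_lt_one hz
  | cons a u =>
    have hcoeff (k : ℕ) : ‖((k : ℂ) ^ (a : ℕ))⁻¹ * Hc u (k - 1)‖ ≤ (k : ℝ) ^ u.length := by
      rw [norm_mul, ← one_mul ((k : ℝ) ^ u.length)]
      refine mul_le_mul (norm_inv_natCast_pow_le_one k a) ((norm_Hc_le u _).trans ?_)
        (norm_nonneg _) zero_le_one
      gcongr
      exact Nat.sub_le k 1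
    have hsummable : Summable fun k : ℕ => ‖((k : ℂ) ^ (a : ℕ))⁻¹ * Hc u (k - 1) * z ^ k‖ := by
      refine .of_nonneg_of_le (fun _ => norm_nonneg _) (fun k => ?_)
        (summable_pow_mul_geometric_of_norm_lt_one u.length (r := ‖z‖) (by simpa using hz))
      rw [norm_mul, norm_pow]
      exact mul_le_mul_of_nonneg_right (hcoeff k) (by positivity)
    have h := hasSum_sum_range_mul_pow hz hsummable
    simp only [← Hc_cons_eq_sum_range] at h
    simpa only [LiC, mul_comm, mul_left_comm] using h

/-- The coercion in `wt` goes through the list monad, so `wt` is not syntactically a `List.map`. -/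
lemma wt_eq_sum_map (s : Comp) : wt s = (s.map PNat.val).sum := by
  rw [← List.flatMap_singleton' (s.map PNat.val), List.flatMap_map]
  simp [wt]

lemma finite_setOf_wt_eq (n : ℕ) : {s : Comp | wt s = n}.Finite := by
  refine Set.Finite.of_finite_image ?_ (List.map_injective_iff.2 PNat.coe_injective).injOn
  refine (Set.finite_range (Composition.blocks (n := n))).subset ?_
  rintro _ ⟨s, hs, rfl⟩
  exact ⟨⟨s.map PNat.val, by simp, (wt_eq_sum_map s).symm.trans hs⟩, rfl⟩

lemma finite_support_homog (α : Comp → ℂ) (n : ℕ) : (Function.support (homog α n)).Finite :=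
  (finite_setOf_wt_eq n).subset fun s hs => by
    by_contra h
    exact hs (if_neg h)

lemma hasSum_HP_mul_pow {P : Comp → ℂ} (hP : (Function.support P).Finite) {z : ℂ}
    (hz : ‖z‖ < 1) : HasSum (fun N => HP P N * z ^ N) (LiP P z / (1 - z)) := by
  have hvanish {f : Comp → ℂ} : ∀ s ∉ hP.toFinset, P s * f s = 0 := fun s hs => by
    rw [Set.Finite.mem_toFinset, Function.notMem_support] at hs
    rw [hs, zero_mul]
  have h := hasSum_sum fun s (_ : s ∈ hP.toFinset) => (hasSum_Hc_mul_pow s hz).mul_left (P s)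
  simp only [← mul_assoc, ← Finset.sum_mul] at h
  simpa only [HP, LiP, tsum_eq_sum hvanish, Finset.sum_div, mul_div_assoc] using h

lemma exists_summable_bound_of_mem_DomR {R r : ℝ} {α : Comp → ℂ} (hα : α ∈ DomR R) (hr : 0 < r)
    (hrR : r < R) :
    ∃ M : ℕ → ℝ, Summable M ∧ ∀ n (z : ℂ), ‖z‖ ≤ r → ‖LiP (homog α n) z‖ ≤ M n := by
  have hfin := (hα r hr hrR).ne
  refine ⟨_, ENNReal.summable_toReal hfin, fun n z hz => ?_⟩
  have hle : (‖LiP (homog α n) z‖₊ : ℝ≥0∞) ≤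
      ⨆ z ∈ Metric.closedBall (0 : ℂ) r, (‖LiP (homog α n) z‖₊ : ℝ≥0∞) :=
    le_iSup₂_of_le z (mem_closedBall_zero_iff.2 hz) le_rfl
  simpa using ENNReal.toReal_mono (ne_top_of_le_ne_top hfin (ENNReal.le_tsum n)) hle

section DoubleSeries

variable {c : ℕ → ℕ → ℂ}

lemma summable_norm_mul_pow_of_forall_norm_le {g : ℕ → ℂ → ℂ} {M : ℕ → ℝ} {ρ r r' : ℝ}
    (hr : 0 ≤ r) (hrr' : r < r') (hr'ρ : r' < ρ)
    (hs : ∀ n (z : ℂ), ‖z‖ < ρ → HasSum (fun N => c n N * z ^ N) (g n z))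
    (hM : ∀ n (z : ℂ), ‖z‖ ≤ r' → ‖g n z‖ ≤ M n) (hMs : Summable M) :
    Summable fun p : ℕ × ℕ => ‖c p.1 p.2‖ * r ^ p.2 := by
  have hr' : 0 < r' := hr.trans_lt hrr'
  have hgeom : Summable fun N : ℕ => (r / r') ^ N :=
    summable_geometric_of_lt_one (by positivity) ((div_lt_one hr').2 hrr')
  have hM0 (n : ℕ) : 0 ≤ M n := (norm_nonneg _).trans (hM n 0 (by simpa using hr'.le))
  refine .of_nonneg_of_le (fun _ => by positivity) (fun p => ?_)
    (hMs.mul_of_nonneg hgeom hM0 fun _ => by positivity)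
  calc ‖c p.1 p.2‖ * r ^ p.2 = ‖c p.1 p.2‖ * r' ^ p.2 * (r / r') ^ p.2 := by
        rw [mul_assoc, ← mul_pow, mul_div_cancel₀ _ hr'.ne']
    _ ≤ M p.1 * (r / r') ^ p.2 := by
        gcongr
        exact norm_mul_pow_le_of_hasSum_pow_mul hr' hr'ρ (hs p.1) (hM p.1) p.2

lemma summable_norm_of_summable_norm_mul_pow {r : ℝ} (hr : 0 < r)
    (hc : Summable fun p : ℕ × ℕ => ‖c p.1 p.2‖ * r ^ p.2) (N : ℕ) :
    Summable fun n => ‖c n N‖ := by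
  have hcol := hc.comp_injective (Prod.mk_left_injective N)
  exact (summable_mul_right_iff (pow_pos hr N).ne').1 hcol

lemma hasSum_tsum_mul_pow {g : ℕ → ℂ} {r : ℝ} {z : ℂ}
    (hc : Summable fun p : ℕ × ℕ => ‖c p.1 p.2‖ * r ^ p.2) (hz : ‖z‖ ≤ r)
    (hg : ∀ n, HasSum (fun N => c n N * z ^ N) (g n)) :
    HasSum (fun N => (∑' n, c n N) * z ^ N) (∑' n, g n) := by
  have hF : Summable fun p : ℕ × ℕ => c p.1 p.2 * z ^ p.2 := by
    refine Summable.of_norm (hc.of_nonneg_of_le (fun _ => norm_nonneg _) fun p => ?_)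
    rw [norm_mul, norm_pow]
    gcongr
  rw [(hF.hasSum.prod_fiberwise hg).tsum_eq]
  refine ((Equiv.prodComm ℕ ℕ).hasSum_iff.2 hF.hasSum).prod_fiberwise fun N => ?_
  rw [← tsum_mul_right]
  exact (((Equiv.prodComm ℕ ℕ).summable_iff.2 hF).prod_factor N).hasSum

end DoubleSeries

/-- Let `0 < R ≤ 1`, `α ∈ Dom_R`, and let `Hα` be the Taylor coefficients of
`Li_α(z)/(1−z)` at `0`.  Then `Σ_{n,N} |H_{α,n}(N)|·r^N < ∞` for every
`r ∈ (0,R)`; in particular, for every `N`, `Σ_n H_{α,n}(N)` converges absolutely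
with sum `Hα N`. -/
theorem harmonic_components_abs_summable (R : ℝ) (hR0 : 0 < R) (hR1 : R ≤ 1)
    (α : Comp → ℂ) (hα : α ∈ DomR R) (Hα : ℕ → ℂ)
    (hHα : ∀ z : ℂ, ‖z‖ < R →
      HasSum (fun N : ℕ => Hα N * z ^ N)
        ((∑' n : ℕ, LiP (homog α n) z) / (1 - z))) :
    (∀ r : ℝ, 0 < r → r < R →
      Summable fun p : ℕ × ℕ => ‖HP (homog α p.1) p.2‖ * r ^ p.2) ∧
    ∀ N : ℕ, (Summable fun n : ℕ => ‖HP (homog α n) N‖) ∧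
      ∑' n : ℕ, HP (homog α n) N = Hα N := by
  have hrows (n : ℕ) (z : ℂ) (hz : ‖z‖ < R) :
      HasSum (fun N => HP (homog α n) N * z ^ N) (LiP (homog α n) z / (1 - z)) :=
    hasSum_HP_mul_pow (finite_support_homog α n) (hz.trans_le hR1)
  have hdouble (r : ℝ) (hr : 0 < r) (hrR : r < R) :
      Summable fun p : ℕ × ℕ => ‖HP (homog α p.1) p.2‖ * r ^ p.2 := by
    obtain ⟨r', hrr', hr'R⟩ := exists_between hrR
    obtain ⟨M, hMs, hM⟩ := exists_summable_bound_of_mem_DomR hα (hr.trans hrr') hr'R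
    refine summable_norm_mul_pow_of_forall_norm_le (c := fun n N => HP (homog α n) N)
      (g := fun n z => LiP (homog α n) z / (1 - z)) hr.le hrr' hr'R hrows (fun n z hz => ?_)
      (hMs.div_const (1 - r'))
    have hz1 : 1 - r' ≤ ‖1 - z‖ := by
      linarith [norm_sub_norm_le (1 : ℂ) z, norm_one (α := ℂ)]
    rw [norm_div]
    exact div_le_div₀ ((norm_nonneg _).trans (hM n 0 (by simpa using (hr.trans hrr').le)))
      (hM n z hz) (by linarith) hz1
  have htotal (z : ℂ) (hz : ‖z‖ < R) :
      HasSum (fun N => (∑' n, HP (homog α n) N) * z ^ N)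
        ((∑' n, LiP (homog α n) z) / (1 - z)) := by
    obtain ⟨r, hzr, hrR⟩ := exists_between hz
    rw [← tsum_div_const]
    exact hasSum_tsum_mul_pow (c := fun n N => HP (homog α n) N)
      (hdouble r ((norm_nonneg z).trans_lt hzr) hrR) hzr.le fun n => hrows n z hz
  have hcols := summable_norm_of_summable_norm_mul_pow (c := fun n N => HP (homog α n) N)
    (half_pos hR0) (hdouble _ (half_pos hR0) (half_lt_self hR0))
  exact ⟨hdouble, fun N => ⟨hcols N, congrFun (eq_of_hasSum_pow_mul hR0 htotal hHα) N⟩⟩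
end
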